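/- Let α ∈ (0,1), ε ∈ (0,1), g_a > 0, and define V : ℝ^{mn} × ℝ^{mn} → ℝ by V(s, a) = g_a·F̄(s) + ((1−ε)(1+α)/2)·‖s‖² − (1−ε)·⟨s, a⟩ + (1/(2α))·‖a‖², where F̄(s) = Σ_{i=1}^n [ log(Σ_{l=1}^m exp(s_{il})) − log m − (1/m) Σ_{l=1}^m s_{il} ]. Then V is positive definite and radially unbounded: V(0,0) = 0, V(s,a) > 0 for all (s,a) ≠ (0,0), and V(s,a) → ∞ as ‖(s,a)‖ → ∞. -/

import Mathlib

open scoped BigOperators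

/-- The potential `F̄(s) = ∑_i [log(∑_l e^{s_{il}}) − log m − (1/m)∑_l s_{il}]`. -/
noncomputable def Fbar (n m : ℕ) (s : Fin n × Fin m → ℝ) : ℝ :=
  ∑ i : Fin n,
    (Real.log (∑ l : Fin m, Real.exp (s (i, l))) - Real.log m -
      (1 / m) * ∑ l : Fin m, s (i, l))

/-- The Lyapunov function
`V(s,a) = g_a F̄(s) + ((1−ε)(1+α)/2)‖s‖² − (1−ε)⟨s,a⟩ + (1/(2α))‖a‖²`. -/
noncomputable def Vfun (n m : ℕ) (α ε ga : ℝ) (s a : Fin n × Fin m → ℝ) : ℝ :=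
  ga * Fbar n m s + ((1 - ε) * (1 + α) / 2) * (∑ p : Fin n × Fin m, s p ^ 2) -
    (1 - ε) * (∑ p : Fin n × Fin m, s p * a p) +
    (1 / (2 * α)) * ∑ p : Fin n × Fin m, a p ^ 2

lemma Fbar_nonneg (n m : ℕ) (hm : 2 ≤ m) (s : Fin n × Fin m → ℝ) :
    0 ≤ Fbar n m s := by
  apply Finset.sum_nonneg
  intro i _
  have hm0 : (0:ℝ) < m := by
    have : (2:ℝ) ≤ m := by exact_mod_cast hm
    linarith
  set μ : ℝ := (1 / (m:ℝ)) * ∑ l : Fin m, s (i, l) with hμ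
  have hmμ : (m:ℝ) * μ = ∑ l : Fin m, s (i, l) := by
    rw [hμ, ← mul_assoc, mul_one_div_cancel (ne_of_gt hm0), one_mul]
  have key : (m:ℝ) * Real.exp μ ≤ ∑ l : Fin m, Real.exp (s (i, l)) := by
    have h1 : ∀ l : Fin m, Real.exp μ * (1 + (s (i, l) - μ)) ≤ Real.exp (s (i, l)) := by
      intro l
      have h := Real.add_one_le_exp (s (i, l) - μ)
      have := mul_le_mul_of_nonneg_left h (Real.exp_nonneg μ)
      calc Real.exp μ * (1 + (s (i, l) - μ)) = Real.exp μ * (s (i, l) - μ + 1) := by ring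
        _ ≤ Real.exp μ * Real.exp (s (i, l) - μ) := this
        _ = Real.exp (s (i, l)) := by rw [← Real.exp_add]; ring_nf
    have hsum : ∑ l : Fin m, (1 + (s (i, l) - μ)) = (m:ℝ) := by
      have h : ∑ l : Fin m, (1 + (s (i, l) - μ)) =
          (m:ℝ) + ((∑ l : Fin m, s (i, l)) - (m:ℝ) * μ) := by
        rw [Finset.sum_add_distrib, Finset.sum_sub_distrib, Finset.sum_const,
          Finset.sum_const, Finset.card_univ, Fintype.card_fin]
        push_cast
        ring
      rw [h, hmμ]
      ring
    calc (m:ℝ) * Real.exp μ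
        = ∑ l : Fin m, Real.exp μ * (1 + (s (i, l) - μ)) := by
          rw [← Finset.mul_sum, hsum]; ring
      _ ≤ ∑ l : Fin m, Real.exp (s (i, l)) := Finset.sum_le_sum fun l _ => h1 l
  have hpos : (0:ℝ) < (m:ℝ) * Real.exp μ := by positivity
  have hlog : Real.log ((m:ℝ) * Real.exp μ) ≤
      Real.log (∑ l : Fin m, Real.exp (s (i, l))) :=
    Real.log_le_log hpos key
  rw [Real.log_mul (ne_of_gt hm0) (Real.exp_ne_zero μ), Real.log_exp] at hlog
  linarith

/-- The Lyapunov function `V` of Proposition 2 is positive definite and radially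
unbounded: `V(0,0) = 0`, `V(s,a) > 0` for `(s,a) ≠ (0,0)`, and `V(s,a) → ∞` as
`‖(s,a)‖ → ∞`. -/
theorem stmt18 (n m : ℕ) (hn : 1 ≤ n) (hm : 2 ≤ m)
    (α ε ga : ℝ) (hα : α ∈ Set.Ioo (0 : ℝ) 1) (hε : ε ∈ Set.Ioo (0 : ℝ) 1)
    (hga : 0 < ga) :
    Vfun n m α ε ga 0 0 = 0 ∧
    (∀ s a : Fin n × Fin m → ℝ, ¬(s = 0 ∧ a = 0) → 0 < Vfun n m α ε ga s a) ∧
    (∀ M : ℝ, ∃ R : ℝ, ∀ s a : Fin n × Fin m → ℝ,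
      R ≤ Real.sqrt ((∑ p : Fin n × Fin m, s p ^ 2) + ∑ p : Fin n × Fin m, a p ^ 2) →
      M ≤ Vfun n m α ε ga s a) := by
  obtain ⟨hα0, hα1⟩ := hα
  obtain ⟨hε0, hε1⟩ := hε
  have hm0 : (0:ℝ) < m := by
    have : (2:ℝ) ≤ m := by exact_mod_cast hm
    linarith
  set δ : ℝ := min (α * (1 - ε) / 2) ((1 - (1 - ε) * α) / (2 * α)) with hδdef
  have hδ0 : 0 < δ := by
    apply lt_min
    · nlinarith
    · apply div_pos
      · nlinarith
      · linarith
  have hF0 : Fbar n m (0 : Fin n × Fin m → ℝ) = 0 := by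
    simp [Fbar]
  have hVlb : ∀ s a : Fin n × Fin m → ℝ,
      δ * ((∑ p : Fin n × Fin m, s p ^ 2) + ∑ p : Fin n × Fin m, a p ^ 2) ≤
        Vfun n m α ε ga s a := by
    intro s a
    set S := ∑ p : Fin n × Fin m, s p ^ 2 with hS
    set A := ∑ p : Fin n × Fin m, a p ^ 2 with hA
    have hSnn : 0 ≤ S := Finset.sum_nonneg fun p _ => sq_nonneg _
    have hAnn : 0 ≤ A := Finset.sum_nonneg fun p _ => sq_nonneg _
    have hI : (∑ p : Fin n × Fin m, s p * a p) ≤ (S + A) / 2 := by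
      have : (∑ p : Fin n × Fin m, s p * a p) ≤
          ∑ p : Fin n × Fin m, (s p ^ 2 + a p ^ 2) / 2 :=
        Finset.sum_le_sum fun p _ => by nlinarith [sq_nonneg (s p - a p)]
      calc (∑ p : Fin n × Fin m, s p * a p)
          ≤ ∑ p : Fin n × Fin m, (s p ^ 2 + a p ^ 2) / 2 := this
        _ = (S + A) / 2 := by rw [hS, hA, ← Finset.sum_add_distrib, Finset.sum_div]
    have hFnn : 0 ≤ Fbar n m s := Fbar_nonneg n m hm s
    have h1 : δ ≤ α * (1 - ε) / 2 := min_le_left _ _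
    have h2 : δ ≤ 1 / (2 * α) - (1 - ε) / 2 := by
      have heq : (1 - (1 - ε) * α) / (2 * α) = 1 / (2 * α) - (1 - ε) / 2 := by
        field_simp
      rw [hδdef]
      exact (min_le_right _ _).trans (le_of_eq heq)
    have hgF : 0 ≤ ga * Fbar n m s := mul_nonneg hga.le hFnn
    have hεnn : (0:ℝ) ≤ 1 - ε := by linarith
    have hI' : (1 - ε) * (∑ p : Fin n × Fin m, s p * a p) ≤ (1 - ε) * ((S + A) / 2) :=
      mul_le_mul_of_nonneg_left hI hεnn
    show δ * (S + A) ≤ ga * Fbar n m s + ((1 - ε) * (1 + α) / 2) * S -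
      (1 - ε) * (∑ p : Fin n × Fin m, s p * a p) + (1 / (2 * α)) * A
    nlinarith [mul_le_mul_of_nonneg_right h1 hSnn, mul_le_mul_of_nonneg_right h2 hAnn]
  refine ⟨?_, ?_, ?_⟩
  · simp [Vfun, hF0]
  · intro s a hne
    have hlb := hVlb s a
    have hSA : 0 < (∑ p : Fin n × Fin m, s p ^ 2) + ∑ p : Fin n × Fin m, a p ^ 2 := by
      by_contra h
      push_neg at h
      have hSnn : 0 ≤ ∑ p : Fin n × Fin m, s p ^ 2 :=
        Finset.sum_nonneg fun p _ => sq_nonneg _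
      have hAnn : 0 ≤ ∑ p : Fin n × Fin m, a p ^ 2 :=
        Finset.sum_nonneg fun p _ => sq_nonneg _
      have hS0 : (∑ p : Fin n × Fin m, s p ^ 2) = 0 := by linarith
      have hA0 : (∑ p : Fin n × Fin m, a p ^ 2) = 0 := by linarith
      apply hne
      constructor
      · funext p
        have := (Finset.sum_eq_zero_iff_of_nonneg
          (fun p _ => sq_nonneg (s p))).mp hS0 p (Finset.mem_univ p)
        exact pow_eq_zero_iff (by norm_num) |>.mp this
      · funext p
        have := (Finset.sum_eq_zero_iff_of_nonneg
          (fun p _ => sq_nonneg (a p))).mp hA0 p (Finset.mem_univ p)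
        exact pow_eq_zero_iff (by norm_num) |>.mp this
    calc (0:ℝ) < δ * ((∑ p : Fin n × Fin m, s p ^ 2) + ∑ p : Fin n × Fin m, a p ^ 2) :=
          mul_pos hδ0 hSA
      _ ≤ _ := hlb
  · intro M
    refine ⟨Real.sqrt (max M 0 / δ) + 1, fun s a hR => ?_⟩
    set S := ∑ p : Fin n × Fin m, s p ^ 2
    set A := ∑ p : Fin n × Fin m, a p ^ 2
    have hSnn : 0 ≤ S := Finset.sum_nonneg fun p _ => sq_nonneg _
    have hAnn : 0 ≤ A := Finset.sum_nonneg fun p _ => sq_nonneg _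
    have hsq : Real.sqrt (S + A) ^ 2 = S + A := Real.sq_sqrt (by linarith)
    have hRnn : 0 ≤ Real.sqrt (max M 0 / δ) + 1 := by positivity
    have hR2 : (Real.sqrt (max M 0 / δ) + 1) ^ 2 ≤ S + A := by
      calc (Real.sqrt (max M 0 / δ) + 1) ^ 2 ≤ Real.sqrt (S + A) ^ 2 :=
            pow_le_pow_left₀ hRnn hR 2
        _ = S + A := hsq
    have hsq2 : Real.sqrt (max M 0 / δ) ^ 2 = max M 0 / δ :=
      Real.sq_sqrt (by positivity)
    have hMδ : max M 0 ≤ δ * (S + A) := by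
      have h3 : max M 0 / δ ≤ S + A := by nlinarith [Real.sqrt_nonneg (max M 0 / δ)]
      calc max M 0 = δ * (max M 0 / δ) := by field_simp
        _ ≤ δ * (S + A) := mul_le_mul_of_nonneg_left h3 hδ0.le
    have := hVlb s a
    have hM : M ≤ max M 0 := le_max_left _ _
    linarith
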